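/- As ε ↓ 0, the functions u^ε(z₁,z₂) = -2(Re z₂)²/log(|z₁|² + ε) - (|z₁|² + ε)(log(|z₁|² + ε) - 2) converge decreasingly (pointwise monotone in ε) and uniformly on every compact subset of 𝔻 × ℂ to u(z₁,z₂) = -(Re z₂)²/log|z₁| - 2|z₁|²(log|z₁| - 1) (with u(0,z₂) = 0). -/

import Mathlib

/-!
With `t = |z₁|² + ε` and `a = (Re z₂)²` one has `u^ε(z) = uProfile a t`, whose `t`-derivative
`2a / (t log² t) - log t + 1` is positive on `(0, 1)`; this is the monotonicity in `ε`.
Since `1 / log t → 0` as `t → 0`, the map `(ε, z) ↦ u^ε(z)` is continuous on `[0, δ] × K` for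
small `δ > 0`, and `u^0 = u`. Uniform continuity on this compact set is uniform convergence on `K`.
-/

/-- `u(z₁,z₂) = -(Re z₂)²/log|z₁| - 2|z₁|²(log|z₁| - 1)`, with `u(0,z₂) = 0`. -/
noncomputable def u (z : ℂ × ℂ) : ℝ :=
  if z.1 = 0 then 0
  else -(z.2.re) ^ 2 / Real.log (‖z.1‖)
    - 2 * (‖z.1‖) ^ 2 * (Real.log (‖z.1‖) - 1)

/-- `u^ε(z₁,z₂) = -2(Re z₂)²/log(|z₁|²+ε) - (|z₁|²+ε)(log(|z₁|²+ε)-2)`. -/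
noncomputable def uE (ε : ℝ) (z : ℂ × ℂ) : ℝ :=
  -2 * (z.2.re) ^ 2 / Real.log ((‖z.1‖) ^ 2 + ε)
    - ((‖z.1‖) ^ 2 + ε) * (Real.log ((‖z.1‖) ^ 2 + ε) - 2)

open Real Set Topology

noncomputable def uProfile (a t : ℝ) : ℝ :=
  -2 * a / log t - t * (log t - 2)

lemma uE_eq_uProfile (ε : ℝ) (z : ℂ × ℂ) :
    uE ε z = uProfile (z.2.re ^ 2) (‖z.1‖ ^ 2 + ε) := rfl

lemma hasDerivAt_uProfile (a : ℝ) {t : ℝ} (ht₀ : t ≠ 0) (ht₁ : t ≠ 1) (ht₂ : t ≠ -1) :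
    HasDerivAt (uProfile a) (2 * a * t⁻¹ / log t ^ 2 - log t + 1) t := by
  have hlog : HasDerivAt (fun s => s * (log s - 2)) (1 * (log t - 2) + t * t⁻¹) t :=
    (hasDerivAt_id t).mul ((hasDerivAt_log ht₀).sub_const 2)
  have hsum := ((hasDerivAt_inv_log ht₀ ht₁ ht₂).const_mul (-2 * a)).sub hlog
  have hfun : ((fun s => -2 * a * (log s)⁻¹) - fun s => s * (log s - 2)) = uProfile a := by
    ext s
    simp only [uProfile, Pi.sub_apply, div_eq_mul_inv]
  rw [hfun] at hsum
  refine hsum.congr_deriv ?_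
  have hL : log t ≠ 0 := log_ne_zero.mpr ⟨ht₀, ht₁, ht₂⟩
  rw [mul_inv_cancel₀ ht₀]
  field_simp
  ring

lemma uProfile_strictMonoOn {a : ℝ} (ha : 0 ≤ a) : StrictMonoOn (uProfile a) (Ioo 0 1) := by
  have hderiv : ∀ t ∈ Ioo (0 : ℝ) 1,
      HasDerivAt (uProfile a) (2 * a * t⁻¹ / log t ^ 2 - log t + 1) t := fun t ht =>
    hasDerivAt_uProfile a ht.1.ne' ht.2.ne (by linarith [ht.1])
  refine strictMonoOn_of_hasDerivWithinAt_pos (convex_Ioo 0 1)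
    (fun t ht => (hderiv t ht).continuousAt.continuousWithinAt)
    (fun t ht => (hderiv t (interior_subset ht)).hasDerivWithinAt) fun t ht => ?_
  rw [interior_Ioo] at ht
  have hlog : log t < 0 := log_neg ht.1 ht.2
  have hfirst : 0 ≤ 2 * a * t⁻¹ / log t ^ 2 :=
    div_nonneg (mul_nonneg (by positivity) (inv_nonneg.mpr ht.1.le)) (sq_nonneg _)
  linarith

lemma continuousAt_inv_log_zero : ContinuousAt (fun x => (log x)⁻¹) 0 := by
  rw [← continuousWithinAt_compl_self, ContinuousWithinAt, log_zero, inv_zero]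
  exact tendsto_inv_atBot_zero.comp tendsto_log_nhdsNE_zero

lemma continuousAt_inv_log {x : ℝ} (hx₁ : x ≠ 1) (hx₂ : x ≠ -1) :
    ContinuousAt (fun x => (log x)⁻¹) x := by
  rcases eq_or_ne x 0 with rfl | hx₀
  · exact continuousAt_inv_log_zero
  · exact (continuousAt_log hx₀).inv₀ (log_ne_zero.mpr ⟨hx₀, hx₁, hx₂⟩)

lemma continuousAt_uncurry_uE {ε : ℝ} {z : ℂ × ℂ} (h₁ : ‖z.1‖ ^ 2 + ε ≠ 1)
    (h₂ : ‖z.1‖ ^ 2 + ε ≠ -1) : ContinuousAt ↿uE (ε, z) := by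
  have ht : Continuous fun p : ℝ × (ℂ × ℂ) => ‖p.2.1‖ ^ 2 + p.1 := by fun_prop
  have hinv : ContinuousAt (fun p : ℝ × (ℂ × ℂ) => (log (‖p.2.1‖ ^ 2 + p.1))⁻¹) (ε, z) :=
    ContinuousAt.comp (g := fun x => (log x)⁻¹) (continuousAt_inv_log h₁ h₂) ht.continuousAt
  have hmullog : Continuous fun p : ℝ × (ℂ × ℂ) =>
      (‖p.2.1‖ ^ 2 + p.1) * log (‖p.2.1‖ ^ 2 + p.1) :=
    continuous_mul_log.comp ht
  change ContinuousAt (fun p : ℝ × (ℂ × ℂ) => uE p.1 p.2) (ε, z)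
  simp only [uE, div_eq_mul_inv, mul_sub]
  fun_prop

-- At `z₁ = 0` this is the junk value `log 0 = 0`, which makes both terms of `u^0` vanish.
lemma uE_zero : uE 0 = u := by
  ext z
  simp only [u, uE, add_zero]
  split_ifs with h
  · simp [h]
  · rw [log_pow]
    push_cast
    rcases eq_or_ne (log ‖z.1‖) 0 with hL | hL
    · rw [hL]
      ring
    · field_simp

lemma sq_add_lt_one_of_lt_sub {r ε : ℝ} (hr : 0 ≤ r) (hε : 0 ≤ ε) (h : r < 1 - ε) :
    r ^ 2 + ε < 1 := by
  nlinarith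

lemma tendstoUniformlyOn_nhdsGT_of_continuousOn {β γ : Type*} [UniformSpace β] [UniformSpace γ]
    {F : ℝ → β → γ} {K : Set β} {a b : ℝ} (hK : IsCompact K) (hab : a < b)
    (hF : ContinuousOn ↿F (Icc a b ×ˢ K)) : TendstoUniformlyOn F (F a) (𝓝[>] a) K := by
  have hunif := (isCompact_Icc.prod hK).uniformContinuousOn_of_continuous hF
  exact fun v hv =>
    ((hunif.tendstoUniformlyOn ⟨le_rfl, hab.le⟩) v hv).filter_mono
      (nhdsWithin_le_of_mem (Icc_mem_nhdsGT hab))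

/-- As `ε ↓ 0`, the `u^ε` converge decreasingly (pointwise monotone in `ε`) and uniformly
on every compact subset of `𝔻 × ℂ` to `u`. -/
theorem uE_decreasing_and_tendstoUniformlyOn :
    (∀ ε ε' : ℝ, 0 < ε' → ε' < ε → ε < 1 → ∀ z : ℂ × ℂ,
      ‖z.1‖ < 1 - ε → uE ε' z ≤ uE ε z) ∧
    (∀ K : Set (ℂ × ℂ), IsCompact K → K ⊆ {p : ℂ × ℂ | ‖p.1‖ < 1} →
      TendstoUniformlyOn (fun ε z => uE ε z) u (nhdsWithin 0 (Set.Ioi 0)) K) := by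
  refine ⟨fun ε ε' hε' hε'ε hε z hz => ?_, fun K hK hK1 => ?_⟩
  · have hlt := sq_add_lt_one_of_lt_sub (norm_nonneg z.1) (by linarith) hz
    have hsq := sq_nonneg ‖z.1‖
    rw [uE_eq_uProfile, uE_eq_uProfile]
    exact (uProfile_strictMonoOn (sq_nonneg _)).monotoneOn
      ⟨by linarith, by linarith⟩ ⟨by linarith, hlt⟩ (by linarith)
  · obtain ⟨δ, hδ, hδK⟩ := hK.exists_forall_le' (f := fun z => 1 - ‖z.1‖) (by fun_prop)
      (fun z hz => sub_pos.mpr (hK1 hz))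
    have hlt : ∀ p ∈ Icc 0 (δ / 2) ×ˢ K, ‖p.2.1‖ ^ 2 + p.1 ∈ Ico 0 1 :=
      fun p ⟨⟨h0, hδ2⟩, hpK⟩ => ⟨add_nonneg (sq_nonneg _) h0,
        sq_add_lt_one_of_lt_sub (norm_nonneg _) h0 (by linarith [hδK p.2 hpK])⟩
    rw [← uE_zero]
    refine tendstoUniformlyOn_nhdsGT_of_continuousOn hK (half_pos hδ) fun p hp => ?_
    obtain ⟨h0, h1⟩ := hlt p hp
    exact (continuousAt_uncurry_uE h1.ne (by linarith)).continuousWithinAt
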